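/- arXiv:2603.01390 — 2 statements merged into one kernel-verified Lean document; each statement's English description precedes it below -/
import Mathlib

section
/- Let k be a field, and let S and M be k-vector spaces. Let δ, s, σ, π : S → S and e : M → M be k-linear maps satisfying: δ ∘ δ = 0, e ∘ e = 0, σ ∘ σ = id, σ ∘ δ = −δ ∘ σ, σ ∘ s = −s ∘ σ, σ ∘ π = π, π ∘ σ = π, π ∘ π = π, δ ∘ π = 0, π ∘ δ = 0, and δ ∘ s + s ∘ δ = id − π. Define d : S ⊗_k M → S ⊗_k M by d = δ ⊗ id_M + σ ⊗ e. Then d ∘ d = 0, and there is a k-linear isomorphism ker(d)/im(d) ≅ im(π) ⊗_k (ker(e)/im(e)). -/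
open TensorProduct LinearMap Function

private lemma tmap_sub_left {k S S' M M' : Type*} [CommRing k]
    [AddCommGroup S] [Module k S] [AddCommGroup S'] [Module k S']
    [AddCommGroup M] [Module k M] [AddCommGroup M'] [Module k M']
    (f g : S →ₗ[k] S') (h : M →ₗ[k] M') :
    TensorProduct.map (f - g) h = TensorProduct.map f h - TensorProduct.map g h := by
  apply TensorProduct.ext'
  intro x y
  simp [TensorProduct.sub_tmul]

private lemma tmap_neg_left {k S S' M M' : Type*} [CommRing k]
    [AddCommGroup S] [Module k S] [AddCommGroup S'] [Module k S']
    [AddCommGroup M] [Module k M] [AddCommGroup M'] [Module k M']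
    (f : S →ₗ[k] S') (h : M →ₗ[k] M') :
    TensorProduct.map (-f) h = -TensorProduct.map f h := by
  apply TensorProduct.ext'
  intro x y
  simp [TensorProduct.neg_tmul]

theorem homology_of_tensor_differential
    {k S M : Type*} [Field k] [AddCommGroup S] [Module k S]
    [AddCommGroup M] [Module k M]
    (δ s σ π : S →ₗ[k] S) (e : M →ₗ[k] M)
    (hδδ : δ ∘ₗ δ = 0) (hee : e ∘ₗ e = 0)
    (hσσ : σ ∘ₗ σ = LinearMap.id)
    (hσδ : σ ∘ₗ δ = -(δ ∘ₗ σ)) (hσs : σ ∘ₗ s = -(s ∘ₗ σ))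
    (hσπ : σ ∘ₗ π = π) (hπσ : π ∘ₗ σ = π) (hππ : π ∘ₗ π = π)
    (hδπ : δ ∘ₗ π = 0) (hπδ : π ∘ₗ δ = 0)
    (hhomotopy : δ ∘ₗ s + s ∘ₗ δ = LinearMap.id - π)
    (d : TensorProduct k S M →ₗ[k] TensorProduct k S M)
    (hd : d = TensorProduct.map δ LinearMap.id + TensorProduct.map σ e) :
    d ∘ₗ d = 0 ∧
    Nonempty
      ((LinearMap.ker d ⧸ (LinearMap.range d).comap (LinearMap.ker d).subtype) ≃ₗ[k]
        TensorProduct k (LinearMap.range π)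
          (LinearMap.ker e ⧸ (LinearMap.range e).comap (LinearMap.ker e).subtype)) := by
  classical
  -- Part 1 : d ∘ d = 0
  have hdd : d ∘ₗ d = 0 := by
    rw [hd, LinearMap.add_comp, LinearMap.comp_add, LinearMap.comp_add,
      ← TensorProduct.map_comp, ← TensorProduct.map_comp, ← TensorProduct.map_comp,
      ← TensorProduct.map_comp, hδδ, hσδ, hee, hσσ]
    rw [TensorProduct.map_zero_left, TensorProduct.map_zero_right, tmap_neg_left]
    simp only [LinearMap.id_comp, LinearMap.comp_id]
    abel
  refine ⟨hdd, ⟨?_⟩⟩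
  -- Notation
  let P : Submodule k S := LinearMap.range π
  let Ke : Submodule k M := LinearMap.ker e
  let Re : Submodule k Ke := (LinearMap.range e).comap Ke.subtype
  let jP : P →ₗ[k] S := P.subtype
  let jK : Ke →ₗ[k] M := Ke.subtype
  let jR : Re →ₗ[k] Ke := Re.subtype
  let q : Ke →ₗ[k] (Ke ⧸ Re) := Re.mkQ
  -- pointwise facts on S
  have hσjP : σ ∘ₗ jP = jP := by
    ext x
    obtain ⟨m, hm⟩ := x.2
    show σ x.1 = x.1
    rw [← hm]
    exact LinearMap.ext_iff.1 hσπ m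
  have hδjP : δ ∘ₗ jP = 0 := by
    ext x
    obtain ⟨m, hm⟩ := x.2
    show δ x.1 = 0
    rw [← hm]
    exact LinearMap.ext_iff.1 hδπ m
  have hπjP : π ∘ₗ jP = jP := by
    ext x
    obtain ⟨m, hm⟩ := x.2
    show π x.1 = x.1
    rw [← hm]
    exact LinearMap.ext_iff.1 hππ m
  have heJK : e ∘ₗ jK = 0 := by
    ext x
    exact x.2
  -- restricted maps
  let π' : S →ₗ[k] P := LinearMap.codRestrict P π (fun m => LinearMap.mem_range_self π m)
  let e' : M →ₗ[k] Ke := LinearMap.codRestrict Ke e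
    (fun m => LinearMap.mem_ker.mpr (LinearMap.ext_iff.1 hee m))
  let r : M →ₗ[k] Re := LinearMap.codRestrict Re e'
    (fun m => Submodule.mem_comap.mpr ⟨m, rfl⟩)
  have hjPπ' : jP ∘ₗ π' = π := rfl
  have hjKe' : jK ∘ₗ e' = e := rfl
  have hjRr : jR ∘ₗ r = e' := rfl
  have hqe' : q ∘ₗ e' = 0 := by
    ext m
    show q (e' m) = 0
    rw [Submodule.mkQ_apply, Submodule.Quotient.mk_eq_zero]
    exact Submodule.mem_comap.mpr ⟨m, rfl⟩
  have hrsurj : Function.Surjective r := by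
    rintro ⟨x, hx⟩
    obtain ⟨m, hm⟩ := hx
    refine ⟨m, ?_⟩
    apply Subtype.ext
    apply Subtype.ext
    exact hm
  -- tensor maps
  let Pi : TensorProduct k S M →ₗ[k] TensorProduct k S M := TensorProduct.map π LinearMap.id
  let B : TensorProduct k P M →ₗ[k] TensorProduct k S M := TensorProduct.map jP LinearMap.id
  let A : TensorProduct k P Ke →ₗ[k] TensorProduct k P M := TensorProduct.map LinearMap.id jK
  let C : TensorProduct k P Ke →ₗ[k] TensorProduct k S M := B ∘ₗ A
  let EP : TensorProduct k P M →ₗ[k] TensorProduct k P M := TensorProduct.map LinearMap.id e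
  let Q : TensorProduct k P Ke →ₗ[k] TensorProduct k P (Ke ⧸ Re) :=
    TensorProduct.map LinearMap.id q
  let ht : TensorProduct k S M →ₗ[k] TensorProduct k S M := TensorProduct.map s LinearMap.id
  -- map-level identities
  have hdB : d ∘ₗ B = B ∘ₗ EP := by
    show d ∘ₗ TensorProduct.map jP LinearMap.id
        = TensorProduct.map jP LinearMap.id ∘ₗ TensorProduct.map LinearMap.id e
    rw [hd, LinearMap.add_comp, ← TensorProduct.map_comp, ← TensorProduct.map_comp,
      ← TensorProduct.map_comp, hδjP, hσjP]
    simp only [TensorProduct.map_zero_left, LinearMap.id_comp, LinearMap.comp_id, zero_add]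
  have hBinj : Function.Injective B := by
    have := Module.Flat.rTensor_preserves_injective_linearMap (M := M) jP
      (Submodule.injective_subtype P)
    exact this
  have hAinj : Function.Injective A := by
    have := Module.Flat.lTensor_preserves_injective_linearMap (M := P) jK
      (Submodule.injective_subtype Ke)
    exact this
  have hCinj : Function.Injective C := by
    have : Function.Injective (⇑B ∘ ⇑A) := hBinj.comp hAinj
    exact this
  have hexact_e : Function.Exact jK e :=
    LinearMap.exact_iff.mpr (Submodule.range_subtype Ke).symm
  have hexactA : Function.Exact A EP := by
    have := Module.Flat.lTensor_exact (M := P) hexact_e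
    exact this
  have hexactQ : Function.Exact (TensorProduct.map (LinearMap.id : P →ₗ[k] P) jR) Q := by
    have := Module.Flat.lTensor_exact (M := P) (LinearMap.exact_subtype_mkQ Re)
    exact this
  have hQsurj : Function.Surjective Q := by
    have := LinearMap.lTensor_surjective (Q := P) (Submodule.mkQ_surjective Re)
    exact this
  have hRsurj : Function.Surjective (TensorProduct.map (LinearMap.id : P →ₗ[k] P) r) := by
    have := LinearMap.lTensor_surjective (Q := P) hrsurj
    exact this
  have hPiB : Pi ∘ₗ B = B := by
    show TensorProduct.map π LinearMap.id ∘ₗ TensorProduct.map jP LinearMap.id = B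
    rw [← TensorProduct.map_comp, hπjP, LinearMap.id_comp]
  have hPiC : Pi ∘ₗ C = C := by
    show Pi ∘ₗ (B ∘ₗ A) = B ∘ₗ A
    rw [← LinearMap.comp_assoc, hPiB]
  have hdPi : d ∘ₗ Pi = Pi ∘ₗ d := by
    show d ∘ₗ TensorProduct.map π LinearMap.id = TensorProduct.map π LinearMap.id ∘ₗ d
    rw [hd, LinearMap.add_comp, LinearMap.comp_add, ← TensorProduct.map_comp,
      ← TensorProduct.map_comp, ← TensorProduct.map_comp, ← TensorProduct.map_comp,
      hδπ, hσπ, hπδ, hπσ]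
    simp only [TensorProduct.map_zero_left, LinearMap.id_comp, LinearMap.comp_id, zero_add]
  have hPifact : Pi = B ∘ₗ TensorProduct.map π' LinearMap.id := by
    show Pi = TensorProduct.map jP LinearMap.id ∘ₗ TensorProduct.map π' LinearMap.id
    rw [← TensorProduct.map_comp, hjPπ', LinearMap.id_comp]
  have hhom2 : d ∘ₗ ht + ht ∘ₗ d = LinearMap.id - Pi := by
    show d ∘ₗ TensorProduct.map s LinearMap.id + TensorProduct.map s LinearMap.id ∘ₗ d
        = LinearMap.id - Pi
    have h1 : TensorProduct.map (δ ∘ₗ s + s ∘ₗ δ) (LinearMap.id : M →ₗ[k] M)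
        = LinearMap.id - Pi := by
      rw [hhomotopy, tmap_sub_left, TensorProduct.map_id]
    rw [TensorProduct.map_add_left] at h1
    rw [hd, LinearMap.add_comp, LinearMap.comp_add, ← TensorProduct.map_comp,
      ← TensorProduct.map_comp, ← TensorProduct.map_comp, ← TensorProduct.map_comp,
      hσs, tmap_neg_left]
    simp only [LinearMap.id_comp, LinearMap.comp_id]
    rw [← h1]
    abel
  have hEPA : EP ∘ₗ A = 0 := by
    show TensorProduct.map LinearMap.id e ∘ₗ TensorProduct.map LinearMap.id jK = 0
    rw [← TensorProduct.map_comp, heJK, TensorProduct.map_zero_right]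
  have hdC : d ∘ₗ C = 0 := by
    show d ∘ₗ (B ∘ₗ A) = 0
    rw [← LinearMap.comp_assoc, hdB, LinearMap.comp_assoc, hEPA, LinearMap.comp_zero]
  have hAe' : A ∘ₗ TensorProduct.map (LinearMap.id : P →ₗ[k] P) e' = EP := by
    show TensorProduct.map LinearMap.id jK ∘ₗ TensorProduct.map LinearMap.id e' = EP
    rw [← TensorProduct.map_comp, hjKe', LinearMap.id_comp]
  have h3 : C ∘ₗ TensorProduct.map (LinearMap.id : P →ₗ[k] P) e' = d ∘ₗ B := by
    show (B ∘ₗ A) ∘ₗ TensorProduct.map (LinearMap.id : P →ₗ[k] P) e' = d ∘ₗ B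
    rw [LinearMap.comp_assoc, hAe', hdB]
  have h4 : Q ∘ₗ TensorProduct.map (LinearMap.id : P →ₗ[k] P) e' = 0 := by
    show TensorProduct.map LinearMap.id q ∘ₗ TensorProduct.map LinearMap.id e' = 0
    rw [← TensorProduct.map_comp, hqe', TensorProduct.map_zero_right]
  have hjRrT : TensorProduct.map (LinearMap.id : P →ₗ[k] P) jR ∘ₗ
      TensorProduct.map LinearMap.id r = TensorProduct.map LinearMap.id e' := by
    rw [← TensorProduct.map_comp, hjRr, LinearMap.id_comp]
  -- membership of Pi x in range C for x in ker d
  have hmem : ∀ x : TensorProduct k S M, d x = 0 → Pi x ∈ LinearMap.range C := by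
    intro x hx
    have hPx : Pi x = B (TensorProduct.map π' LinearMap.id x) := by
      rw [hPifact]; rfl
    have h0 : B (EP (TensorProduct.map π' LinearMap.id x)) = 0 := by
      have h1 : (B ∘ₗ EP) (TensorProduct.map π' LinearMap.id x)
          = (d ∘ₗ B) (TensorProduct.map π' LinearMap.id x) := by rw [hdB]
      have h2 : (d ∘ₗ Pi) x = (Pi ∘ₗ d) x := by rw [hdPi]
      simp only [LinearMap.comp_apply] at h1 h2
      rw [h1, ← hPx, h2, hx, map_zero]
    have hy0 : EP (TensorProduct.map π' LinearMap.id x) = 0 :=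
      hBinj (by rw [h0, map_zero])
    obtain ⟨z, hz⟩ := (hexactA _).mp hy0
    refine ⟨z, ?_⟩
    show B (A z) = Pi x
    rw [hPx, hz]
  -- the homology comparison map
  let EC : TensorProduct k P Ke ≃ₗ[k] LinearMap.range C := LinearEquiv.ofInjective C hCinj
  let Φ0 : LinearMap.ker d →ₗ[k] LinearMap.range C :=
    LinearMap.codRestrict (LinearMap.range C) (Pi ∘ₗ (LinearMap.ker d).subtype)
      (fun x => hmem x.1 x.2)
  let Φ : LinearMap.ker d →ₗ[k] TensorProduct k P (Ke ⧸ Re) :=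
    Q ∘ₗ EC.symm.toLinearMap ∘ₗ Φ0
  have hΦeval : ∀ (x : LinearMap.ker d) (z : TensorProduct k P Ke),
      C z = Pi x.1 → Φ x = Q z := by
    intro x z hz
    have h1 : EC.symm (Φ0 x) = z := by
      rw [LinearEquiv.symm_apply_eq]
      apply Subtype.ext
      rw [LinearEquiv.ofInjective_apply]
      exact hz.symm
    show Q (EC.symm (Φ0 x)) = Q z
    rw [h1]
  have hΦsurj : Function.Surjective Φ := by
    intro t
    obtain ⟨z, hz⟩ := hQsurj t
    have hCz0 : d (C z) = 0 := by
      have := LinearMap.ext_iff.1 hdC z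
      simpa using this
    refine ⟨⟨C z, LinearMap.mem_ker.mpr hCz0⟩, ?_⟩
    rw [hΦeval ⟨C z, LinearMap.mem_ker.mpr hCz0⟩ z (LinearMap.ext_iff.1 hPiC z).symm, hz]
  have hΦker : LinearMap.ker Φ = (LinearMap.range d).comap (LinearMap.ker d).subtype := by
    ext x
    simp only [LinearMap.mem_ker, Submodule.mem_comap, LinearMap.mem_range]
    constructor
    · intro hx
      have hCz : C (EC.symm (Φ0 x)) = Pi x.1 := by
        have h5 : EC (EC.symm (Φ0 x)) = Φ0 x := EC.apply_symm_apply _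
        have h6 := congrArg Subtype.val h5
        rw [LinearEquiv.ofInjective_apply] at h6
        exact h6
      have hQz : Q (EC.symm (Φ0 x)) = 0 := hx
      obtain ⟨w, hw⟩ := (hexactQ _).mp hQz
      obtain ⟨v, hv⟩ := hRsurj w
      have hz2 : EC.symm (Φ0 x) = TensorProduct.map LinearMap.id e' v := by
        rw [← hw, ← hv, ← LinearMap.comp_apply, hjRrT]
      have hPix : Pi x.1 = d (B v) := by
        rw [← hCz, hz2]
        exact LinearMap.ext_iff.1 h3 v
      have hhx := LinearMap.ext_iff.1 hhom2 x.1
      simp only [LinearMap.add_apply, LinearMap.comp_apply, LinearMap.sub_apply,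
        LinearMap.id_apply] at hhx
      have hdx : d x.1 = 0 := x.2
      rw [hdx, map_zero, add_zero] at hhx
      refine ⟨ht x.1 + B v, ?_⟩
      rw [map_add, hhx, ← hPix]
      abel
    · rintro ⟨w, hw⟩
      replace hw : d w = ↑x := hw
      have hPix : Pi x.1 = C (TensorProduct.map LinearMap.id e' (TensorProduct.map π' LinearMap.id w)) := by
        have h2 := LinearMap.ext_iff.1 hdPi w
        simp only [LinearMap.comp_apply] at h2
        have hPiw : Pi w = B (TensorProduct.map π' LinearMap.id w) := by
          rw [hPifact]; rfl
        rw [← hw, ← h2, hPiw]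
        exact (LinearMap.ext_iff.1 h3 (TensorProduct.map π' LinearMap.id w)).symm
      rw [hΦeval x _ hPix.symm]
      exact LinearMap.ext_iff.1 h4 (TensorProduct.map π' LinearMap.id w)
  exact (Submodule.quotEquivOfEq _ _ hΦker.symm).trans (Φ.quotKerEquivOfSurjective hΦsurj)
end

section
/- Let n ≥ 2. Define deg_n : {1,…,2n} × {1,…,2n} → ℤ by deg_n(i,j) = j − i if both i, j ≤ n or both i, j > n; deg_n(i,j) = j − i − n if i ≤ n < j; and deg_n(i,j) = j − i + n if j ≤ n < i. Fix p, q ∈ {1,…,n}, and let φ be the unique order-preserving bijection from ({1,…,n}∖{p}) ∪ ({n+1,…,2n}∖{n+q}) onto {1,…,2(n−1)} that maps {1,…,n}∖{p} onto {1,…,n−1} and {n+1,…,2n}∖{n+q} onto {n,…,2n−2}. Then deg_n(i,j) = deg_{n−1}(φ(i), φ(j)) for all i, j in the domain of φ if and only if (p,q) = (1,1) or (p,q) = (n,n). -/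
set_option maxHeartbeats 1000000


/-!
STATEMENT 8: Let `deg_n` be the principal good grading of `gl(n|n)` on indices
`{1,…,2n}`.  For `p, q ∈ {1,…,n}`, let `φ` be the (unique) order-preserving
bijection from `({1,…,n}∖{p}) ∪ ({n+1,…,2n}∖{n+q})` onto `{1,…,2(n−1)}`
mapping the first part onto `{1,…,n−1}` and the second onto `{n,…,2n−2}`.
Then `deg_n(i,j) = deg_{n−1}(φ i, φ j)` for all `i, j` in the domain iff
`(p,q) = (1,1)` or `(p,q) = (n,n)`.
-/

/-- The principal good grading of `gl(n|n)`: the degree of the matrix unit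
`e_{ij}` (indices `1 ≤ i, j ≤ 2n`). -/
def principalDeg (n i j : ℕ) : ℤ :=
  if i ≤ n then
    (if j ≤ n then (j : ℤ) - (i : ℤ) else (j : ℤ) - (i : ℤ) - (n : ℤ))
  else
    (if j ≤ n then (j : ℤ) - (i : ℤ) + (n : ℤ) else (j : ℤ) - (i : ℤ))

lemma phi_formula
    (n : ℕ) (hn : 2 ≤ n) (p q : ℕ)
    (hp1 : 1 ≤ p) (hp2 : p ≤ n) (hq1 : 1 ≤ q) (hq2 : q ≤ n)
    (φ : ℕ → ℕ)
    (hφ1 : Set.BijOn φ (Set.Icc 1 n \ {p}) (Set.Icc 1 (n - 1)))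
    (hφ2 : Set.BijOn φ (Set.Icc (n + 1) (2 * n) \ {n + q})
      (Set.Icc n (2 * n - 2)))
    (hφmono : StrictMonoOn φ
      ((Set.Icc 1 n \ {p}) ∪ (Set.Icc (n + 1) (2 * n) \ {n + q}))) :
    ∀ a ∈ (Set.Icc 1 n \ {p}) ∪ (Set.Icc (n + 1) (2 * n) \ {n + q}),
      φ a = a - (if p < a then 1 else 0) - (if n + q < a then 1 else 0) := by
  set S := (Set.Icc 1 n \ {p}) ∪ (Set.Icc (n + 1) (2 * n) \ {n + q}) with hS
  have hmem : ∀ a, a ∈ S ↔ 1 ≤ a ∧ a ≤ 2 * n ∧ a ≠ p ∧ a ≠ n + q := by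
    intro a
    simp only [hS, Set.mem_union, Set.mem_diff, Set.mem_Icc, Set.mem_singleton_iff]
    omega
  have hmaps : ∀ a ∈ S, 1 ≤ φ a ∧ φ a ≤ 2 * n - 2 := by
    intro a ha
    rcases ha with h | h
    · have := hφ1.mapsTo h
      simp only [Set.mem_Icc] at this
      omega
    · have := hφ2.mapsTo h
      simp only [Set.mem_Icc] at this
      omega
  have hsurj : ∀ y, 1 ≤ y → y ≤ 2 * n - 2 → ∃ x ∈ S, φ x = y := by
    intro y h1 h2
    by_cases hy : y ≤ n - 1
    · obtain ⟨x, hx, hfx⟩ := hφ1.surjOn (Set.mem_Icc.mpr ⟨h1, hy⟩)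
      exact ⟨x, Or.inl hx, hfx⟩
    · obtain ⟨x, hx, hfx⟩ := hφ2.surjOn (Set.mem_Icc.mpr ⟨by omega, h2⟩)
      exact ⟨x, Or.inr hx, hfx⟩
  intro a ha
  have ha' := (hmem a).mp ha
  have hbij : ((Finset.Icc 1 (2 * n)).filter (fun x => x ≠ p ∧ x ≠ n + q ∧ x < a)).card
      = (Finset.Ico 1 (φ a)).card := by
    apply Finset.card_bij (fun x _ => φ x)
    · intro x hx
      simp only [Finset.mem_filter, Finset.mem_Icc] at hx
      have hxS : x ∈ S := (hmem x).mpr ⟨hx.1.1, hx.1.2, hx.2.1, hx.2.2.1⟩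
      exact Finset.mem_Ico.mpr ⟨(hmaps x hxS).1, hφmono hxS ha hx.2.2.2⟩
    · intro x1 h1 x2 h2 he
      refine hφmono.injOn ?_ ?_ he
      · simp only [Finset.mem_filter, Finset.mem_Icc] at h1
        exact (hmem x1).mpr ⟨h1.1.1, h1.1.2, h1.2.1, h1.2.2.1⟩
      · simp only [Finset.mem_filter, Finset.mem_Icc] at h2
        exact (hmem x2).mpr ⟨h2.1.1, h2.1.2, h2.2.1, h2.2.2.1⟩
    · intro y hy
      simp only [Finset.mem_Ico] at hy
      obtain ⟨x, hxS, rfl⟩ := hsurj y hy.1 (by have := (hmaps a ha).2; omega)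
      have hx' := (hmem x).mp hxS
      refine ⟨x, ?_, rfl⟩
      simp only [Finset.mem_filter, Finset.mem_Icc]
      exact ⟨⟨hx'.1, hx'.2.1⟩, hx'.2.2.1, hx'.2.2.2, (hφmono.lt_iff_lt hxS ha).mp hy.2⟩
  have hset : (Finset.Icc 1 (2 * n)).filter (fun x => x ≠ p ∧ x ≠ n + q ∧ x < a)
      = ((Finset.Ico 1 a).erase (n + q)).erase p := by
    ext x
    simp only [Finset.mem_filter, Finset.mem_Icc, Finset.mem_erase, Finset.mem_Ico]
    omega
  have hc : (((Finset.Ico 1 a).erase (n + q)).erase p).card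
      = (a - 1) - (if n + q < a then 1 else 0) - (if p < a then 1 else 0) := by
    by_cases h1 : n + q < a
    · have hq' : n + q ∈ Finset.Ico 1 a := Finset.mem_Ico.mpr ⟨by omega, h1⟩
      have hp' : p ∈ (Finset.Ico 1 a).erase (n + q) :=
        Finset.mem_erase.mpr ⟨by omega, Finset.mem_Ico.mpr ⟨by omega, by omega⟩⟩
      rw [Finset.card_erase_of_mem hp', Finset.card_erase_of_mem hq', Nat.card_Ico]
      split_ifs <;> omega
    · rw [show (Finset.Ico 1 a).erase (n + q) = Finset.Ico 1 a from
        Finset.erase_eq_of_notMem (by simp only [Finset.mem_Ico]; omega)]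
      by_cases h2 : p < a
      · rw [Finset.card_erase_of_mem (Finset.mem_Ico.mpr ⟨by omega, h2⟩), Nat.card_Ico]
        split_ifs <;> omega
      · rw [show (Finset.Ico 1 a).erase p = Finset.Ico 1 a from
          Finset.erase_eq_of_notMem (by simp only [Finset.mem_Ico]; omega), Nat.card_Ico]
        split_ifs <;> omega
  rw [hset, hc, Nat.card_Ico] at hbij
  have h1 := (hmaps a ha).1
  split_ifs at hbij ⊢ <;> omega

theorem graded_DS_subalgebra_iff_corner
    (n : ℕ) (hn : 2 ≤ n) (p q : ℕ)
    (hp : p ∈ Finset.Icc 1 n) (hq : q ∈ Finset.Icc 1 n)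
    (φ : ℕ → ℕ)
    (hφ1 : Set.BijOn φ (Set.Icc 1 n \ {p}) (Set.Icc 1 (n - 1)))
    (hφ2 : Set.BijOn φ (Set.Icc (n + 1) (2 * n) \ {n + q})
      (Set.Icc n (2 * n - 2)))
    (hφmono : StrictMonoOn φ
      ((Set.Icc 1 n \ {p}) ∪ (Set.Icc (n + 1) (2 * n) \ {n + q}))) :
    (∀ i ∈ (Set.Icc 1 n \ {p}) ∪ (Set.Icc (n + 1) (2 * n) \ {n + q}),
      ∀ j ∈ (Set.Icc 1 n \ {p}) ∪ (Set.Icc (n + 1) (2 * n) \ {n + q}),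
        principalDeg n i j = principalDeg (n - 1) (φ i) (φ j)) ↔
      ((p = 1 ∧ q = 1) ∨ (p = n ∧ q = n)) := by
  simp only [Finset.mem_Icc] at hp hq
  have hphi := phi_formula n hn p q hp.1 hp.2 hq.1 hq.2 φ hφ1 hφ2 hφmono
  have hmem : ∀ a, a ∈ (Set.Icc 1 n \ {p}) ∪ (Set.Icc (n + 1) (2 * n) \ {n + q})
      ↔ 1 ≤ a ∧ a ≤ 2 * n ∧ a ≠ p ∧ a ≠ n + q := by
    intro a
    simp only [Set.mem_union, Set.mem_diff, Set.mem_Icc, Set.mem_singleton_iff]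
    omega
  constructor
  · intro H
    have hpcase : p = 1 ∨ p = n := by
      by_contra hcon
      push_neg at hcon
      have h1m := (hmem 1).mpr (by omega)
      have hnm := (hmem n).mpr (by omega)
      have e1 : φ 1 = 1 := by rw [hphi 1 h1m]; split_ifs <;> omega
      have e2 : φ n = n - 1 := by rw [hphi n hnm]; split_ifs <;> omega
      have h := H 1 h1m n hnm
      rw [e1, e2] at h
      simp only [principalDeg] at h
      split_ifs at h <;> omega
    have hqcase : q = 1 ∨ q = n := by
      by_contra hcon
      push_neg at hcon
      have h1m := (hmem (n + 1)).mpr (by omega)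
      have hnm := (hmem (2 * n)).mpr (by omega)
      have e1 : φ (n + 1) = n := by rw [hphi (n + 1) h1m]; split_ifs <;> omega
      have e2 : φ (2 * n) = 2 * n - 2 := by rw [hphi (2 * n) hnm]; split_ifs <;> omega
      have h := H (n + 1) h1m (2 * n) hnm
      rw [e1, e2] at h
      simp only [principalDeg] at h
      split_ifs at h <;> omega
    rcases hpcase with hp1 | hpn <;> rcases hqcase with hq1 | hqn
    · exact Or.inl ⟨hp1, hq1⟩
    · -- p = 1, q = n : contradiction via i = n, j = n + 1
      exfalso
      have him := (hmem n).mpr (by omega)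
      have hjm := (hmem (n + 1)).mpr (by omega)
      have e1 : φ n = n - 1 := by rw [hphi n him]; split_ifs <;> omega
      have e2 : φ (n + 1) = n := by rw [hphi (n + 1) hjm]; split_ifs <;> omega
      have h := H n him (n + 1) hjm
      rw [e1, e2] at h
      simp only [principalDeg] at h
      split_ifs at h <;> omega
    · -- p = n, q = 1 : contradiction via i = 1, j = n + 2
      exfalso
      have him := (hmem 1).mpr (by omega)
      have hjm := (hmem (n + 2)).mpr (by omega)
      have e1 : φ 1 = 1 := by rw [hphi 1 him]; split_ifs <;> omega
      have e2 : φ (n + 2) = n := by rw [hphi (n + 2) hjm]; split_ifs <;> omega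
      have h := H 1 him (n + 2) hjm
      rw [e1, e2] at h
      simp only [principalDeg] at h
      split_ifs at h <;> omega
    · exact Or.inr ⟨hpn, hqn⟩
  · intro hcase i hi j hj
    obtain ⟨hi1, hi2, hi3, hi4⟩ := (hmem i).mp hi
    obtain ⟨hj1, hj2, hj3, hj4⟩ := (hmem j).mp hj
    have ei := hphi i hi
    have ej := hphi j hj
    clear hi hj hmem hphi hφ1 hφ2 hφmono
    rcases hcase with ⟨hp1, hq1⟩ | ⟨hpn, hqn⟩ <;> subst p <;> subst q <;>
      by_cases hci : i ≤ n <;> by_cases hcj : j ≤ n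
    all_goals
      rw [show φ i = _ from ei, show φ j = _ from ej]
    all_goals
      simp only [principalDeg]
    all_goals
      split_ifs <;> omega
end
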